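/- arXiv:2502.04112 — 2 statements merged into one kernel-verified Lean document; each statement's English description precedes it below -/
import Mathlib

section
/- For real matrices X (m×n), Z (n×p) and Y (p×q), the triple product admits the star-product representation X Z Y = Z ⋆ (vec(X) · vec(Yᵀ)ᵀ), where vec(X)·vec(Yᵀ)ᵀ is the mn×pq matrix regarded as an n×p array of m×q blocks. -/
open Matrix Kronecker
open scoped BigOperators

noncomputable section

/-- Column-stacking vectorization: `vecm X (j, i) = X i j`. -/
def vecm {m n : ℕ} (X : Matrix (Fin m) (Fin n) ℝ) : Fin n × Fin m → ℝ := fun p => X p.2 p.1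

/-- Star product of an `m × n` matrix with an `mp × nq` matrix regarded as an `m × n`
array of `p × q` blocks. -/
def starProd {m n p q : ℕ} (A : Matrix (Fin m) (Fin n) ℝ)
    (B : Matrix (Fin m × Fin p) (Fin n × Fin q) ℝ) : Matrix (Fin p) (Fin q) ℝ :=
  Matrix.of fun r s => ∑ i, ∑ j, A i j * B (i, r) (j, s)

/-- The special partition `A^{[i,j]}` of an `mp × nq` matrix. -/
def spart {m n p q : ℕ} (A : Matrix (Fin m × Fin p) (Fin n × Fin q) ℝ) (i : Fin p) (j : Fin q) :
    Matrix (Fin m) (Fin n) ℝ := Matrix.of fun r s => A (r, i) (s, j)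

/-- The commutation matrix `K_{mn}`. -/
def commM (m n : ℕ) : Matrix (Fin m × Fin n) (Fin n × Fin m) ℝ :=
  ∑ i : Fin m, ∑ j : Fin n,
    (Matrix.single i j (1 : ℝ)) ⊗ₖ (Matrix.single i j (1 : ℝ))ᵀ

theorem starProd_vecMulVec {m n p q : ℕ} (A : Matrix (Fin m) (Fin n) ℝ)
    (u : Fin m × Fin p → ℝ) (v : Fin n × Fin q → ℝ) :
    starProd A (vecMulVec u v) = (of fun r i => u (i, r)) * A * of fun j s => v (j, s) := by
  ext r s
  simp only [starProd, of_apply, vecMulVec_apply, mul_apply, Finset.sum_mul]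
  rw [Finset.sum_comm]
  exact Finset.sum_congr rfl fun i _ => Finset.sum_congr rfl fun j _ => by ring

/-- equation (A.3): `X Z Y = Z ⋆ (vec(X)·vec(Yᵀ)ᵀ)`. -/
theorem triple_product_star {m n p q : ℕ} (X : Matrix (Fin m) (Fin n) ℝ)
    (Z : Matrix (Fin n) (Fin p) ℝ) (Y : Matrix (Fin p) (Fin q) ℝ) :
    X * Z * Y = starProd Z (Matrix.vecMulVec (vecm X) (vecm Yᵀ)) :=
  (starProd_vecMulVec Z (vecm X) (vecm Yᵀ)).symm

end
end

section
/- Let M be an mp×nq real matrix, and let A (a×m), B (n×b), X (c×p), Y (q×d) be real matrices. Then (A ⊗ X) · M · (B ⊗ Y) = Σ_{i=1}^p Σ_{j=1}^q (A M^{[i,j]} B) ⊗ (X E^{(i,j)}_{p,q} Y). -/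
open Matrix Kronecker
open scoped BigOperators

noncomputable section

/-!
Every `mp × nq` matrix decomposes as `M = ∑ i j, M^{[i,j]} ⊗ E^{(i,j)}`. Multiplying out with the
mixed-product rule `(A ⊗ X)(N ⊗ E)(B ⊗ Y) = (A N B) ⊗ (X E Y)` gives the identity term by term.
-/

namespace Matrix

variable {R : Type*} [CommSemiring R]
variable {l m n o : Type*} [Fintype n] [Fintype o] [DecidableEq n] [DecidableEq o]

theorem sum_kronecker_single_eq (M : Matrix (l × n) (m × o) R) :
    ∑ i : n, ∑ j : o, (of fun r s => M (r, i) (s, j)) ⊗ₖ single i j (1 : R) = M := by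
  ext ⟨r, i'⟩ ⟨s, j'⟩
  simp [single, sum_apply, ite_and, mul_ite]

theorem kronecker_mul_kronecker_mul_kronecker {α β γ δ ε ζ η θ : Type*}
    [Fintype β] [Fintype γ] [Fintype ζ] [Fintype η]
    (A : Matrix α β R) (N : Matrix β γ R) (B : Matrix γ δ R)
    (X : Matrix ε ζ R) (E : Matrix ζ η R) (Y : Matrix η θ R) :
    (A ⊗ₖ X) * (N ⊗ₖ E) * (B ⊗ₖ Y) = (A * N * B) ⊗ₖ (X * E * Y) := by
  rw [← mul_kronecker_mul, ← mul_kronecker_mul]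

end Matrix

theorem sum_spart_kronecker_single {m n p q : ℕ} (M : Matrix (Fin m × Fin p) (Fin n × Fin q) ℝ) :
    ∑ i : Fin p, ∑ j : Fin q, spart M i j ⊗ₖ single i j (1 : ℝ) = M :=
  sum_kronecker_single_eq M

/-- sandwiching a partitioned matrix between Kronecker products. -/
theorem kronecker_sandwich {m n p q a b c d : ℕ}
    (M : Matrix (Fin m × Fin p) (Fin n × Fin q) ℝ)
    (A : Matrix (Fin a) (Fin m) ℝ) (B : Matrix (Fin n) (Fin b) ℝ)
    (X : Matrix (Fin c) (Fin p) ℝ) (Y : Matrix (Fin q) (Fin d) ℝ) :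
    (A ⊗ₖ X) * M * (B ⊗ₖ Y) =
      ∑ i : Fin p, ∑ j : Fin q,
        (A * spart M i j * B) ⊗ₖ (X * Matrix.single i j (1 : ℝ) * Y) := by
  conv_lhs => rw [← sum_spart_kronecker_single M]
  simp only [Matrix.mul_sum, Matrix.sum_mul, kronecker_mul_kronecker_mul_kronecker]

end
end
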